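/- Let W be strictly increasing right-continuous and V strictly increasing left-continuous on [0,1] with W(0)=V(0)=0. Define F₂(s) = ∫_{[0,s)} (W(x) − W(ξ)) dV(ξ) for fixed x ∈ [0,1], and recursively F_{2n}(s) by alternating integration as F_{2n}(s) = ∫_{[0,s)} F_{2n-1}(x) − F_{2n-1}(ξ) dV(ξ), F_{2n+1}(s) = ∫_{(0,s]} F_{2n}(x) − F_{2n}(ξ) dW(ξ) with F₁(s)=W(s). Then for all 0 ≤ s ≤ x ≤ 1 and n ≥ 1, F_{2n}(x) − F_{2n}(s) ≤ (F₂(x) − F₂(s))ⁿ / n!. -/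

import Mathlib

/-!
Let `ν` be the measure `(W x - W ξ) dμV(ξ)` on `[0, x]`, so that `F₂(x) - F₂(s) = ν[s, x)`.
If `F_{2n}(x) - F_{2n}(η) ≤ ν[η, x)ⁿ/n!` for all `η`, integrating over `(ξ, x]` against `dW`
gives `F_{2n+1}(x) - F_{2n+1}(ξ) ≤ ν(ξ, x)ⁿ/n! · (W x - W ξ)`, and integrating that over `[s, x)`
against `dμV` gives `F_{2n+2}(x) - F_{2n+2}(s) ≤ (1/n!) ∫_{[s,x)} ν(ξ, x)ⁿ dν(ξ)`.
For any finite measure this integral is at most `ν[s, x)ⁿ⁺¹/(n+1)`, by the layer-cake formula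
and the tail bound `ν{ξ ∈ [s, x) : ν(ξ, x) ≥ t} ≤ ν[s, x) - t`.
-/

open MeasureTheory Set

theorem antitone_measureReal_Ioo (ν : Measure ℝ) [IsFiniteMeasure ν] (x : ℝ) :
    Antitone fun ξ => ν.real (Ioo ξ x) :=
  fun _ _ hab => measureReal_mono (Ioo_subset_Ioo_left hab)

theorem measure_setOf_le_measureReal_Ioo_le (ν : Measure ℝ) [IsFiniteMeasure ν] (s x t : ℝ) :
    ν {ξ ∈ Ico s x | t ≤ ν.real (Ioo ξ x)} ≤ ν (Ico s x) - ENNReal.ofReal t := by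
  have hmeas : MeasurableSet {ξ ∈ Ico s x | t ≤ ν.real (Ioo ξ x)} :=
    measurableSet_Ico.inter (measurableSet_le measurable_const
      (antitone_measureReal_Ioo ν x).measurable : MeasurableSet {ξ | t ≤ ν.real (Ioo ξ x)})
  rw [hmeas.measure_eq_iSup_isCompact_of_ne_top (measure_ne_top _ _)]
  refine iSup₂_le fun K hKS => iSup_le fun hK => ?_
  rcases K.eq_empty_or_nonempty with rfl | hKne
  · simp
  -- a compact `K` has a largest point, so `K ⊆ [s, sSup K]`, which is disjoint from `(sSup K, x)`
  obtain ⟨⟨hsk, hkx⟩, htk⟩ := hKS (hK.sSup_mem hKne)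
  have hK_sub : K ⊆ Icc s (sSup K) := fun ξ hξ => ⟨(hKS hξ).1.1, le_csSup hK.bddAbove hξ⟩
  have hsplit : ν (Icc s (sSup K)) + ν (Ioo (sSup K) x) = ν (Ico s x) := by
    rw [← measure_union (disjoint_left.2 fun a ha hb => hb.1.not_ge ha.2) measurableSet_Ioo,
      Icc_union_Ioo_eq_Ico hsk hkx]
  refine (measure_mono hK_sub).trans (ENNReal.le_sub_of_add_le_right ENNReal.ofReal_ne_top ?_)
  rw [← hsplit]
  gcongr
  exact ENNReal.ofReal_le_of_le_toReal htk

theorem integral_sub_mul_pow (M : ℝ) (n : ℕ) :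
    ∫ t in (0 : ℝ)..M, (M - t) * ((n + 1) * t ^ n) = M ^ (n + 2) / (n + 2) := by
  have hderiv : ∀ t, HasDerivAt (fun t : ℝ => M * t ^ (n + 1) - (n + 1) / (n + 2) * t ^ (n + 2))
      ((M - t) * ((n + 1) * t ^ n)) t := by
    intro t
    refine (((hasDerivAt_pow (n + 1) t).const_mul M).sub
      ((hasDerivAt_pow (n + 2) t).const_mul _)).congr_deriv ?_
    simp only [Nat.add_sub_cancel]
    push_cast
    field_simp
    ring
  rw [intervalIntegral.integral_eq_sub_of_hasDerivAt (fun t _ => hderiv t)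
    (by apply Continuous.intervalIntegrable; fun_prop)]
  field_simp
  ring

theorem lintegral_Ioi_ofReal_sub_mul_pow {M : ℝ} (hM : 0 ≤ M) (n : ℕ) :
    ∫⁻ t in Ioi 0, (ENNReal.ofReal M - ENNReal.ofReal t) * ENNReal.ofReal ((n + 1) * t ^ n) =
      ENNReal.ofReal (M ^ (n + 2) / (n + 2)) := by
  have hvanish : ∫⁻ t in Ioi M,
      (ENNReal.ofReal M - ENNReal.ofReal t) * ENNReal.ofReal ((n + 1) * t ^ n) = 0 := by
    refine setLIntegral_eq_zero measurableSet_Ioi fun t (ht : M < t) => ?_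
    rw [tsub_eq_zero_of_le (ENNReal.ofReal_le_ofReal ht.le), zero_mul, Pi.zero_apply]
  rw [← Ioc_union_Ioi_eq_Ioi hM, lintegral_union measurableSet_Ioi Ioc_disjoint_Ioi_same,
    hvanish, add_zero, ← integral_sub_mul_pow, intervalIntegral.integral_of_le hM,
    ofReal_integral_eq_lintegral_ofReal]
  · refine setLIntegral_congr_fun measurableSet_Ioc fun t ht => ?_
    rw [ENNReal.ofReal_mul (sub_nonneg.2 ht.2), ENNReal.ofReal_sub _ ht.1.le]
  · exact (Continuous.integrableOn_Ioc (by fun_prop))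
  · refine (ae_restrict_iff' measurableSet_Ioc).2 (Filter.Eventually.of_forall fun t ht => ?_)
    have := ht.1.le
    have := sub_nonneg.2 ht.2
    positivity

theorem lintegral_measureReal_Ioo_pow_le (ν : Measure ℝ) [IsFiniteMeasure ν] (s x : ℝ) (n : ℕ) :
    ∫⁻ ξ in Ico s x, ENNReal.ofReal (ν.real (Ioo ξ x) ^ (n + 1)) ∂ν ≤
      ENNReal.ofReal (ν.real (Ico s x) ^ (n + 2) / (n + 2)) := by
  have hlayer := lintegral_comp_eq_lintegral_meas_le_mul (ν.restrict (Ico s x))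
    (Filter.Eventually.of_forall fun ξ => measureReal_nonneg)
    (antitone_measureReal_Ioo ν x).measurable.aemeasurable
    (g := fun t => (n + 1) * t ^ n) (fun t _ => by apply Continuous.intervalIntegrable; fun_prop)
    ((ae_restrict_iff' measurableSet_Ioi).2 (Filter.Eventually.of_forall fun t (ht : 0 < t) => by
      positivity))
  have hpow : ∀ y : ℝ, ∫ t in (0 : ℝ)..y, (n + 1) * t ^ n = y ^ (n + 1) := fun y => by
    rw [intervalIntegral.integral_const_mul, integral_pow]
    field_simp
    simp
  simp only [hpow] at hlayer
  rw [hlayer, ← lintegral_Ioi_ofReal_sub_mul_pow measureReal_nonneg, ofReal_measureReal]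
  refine lintegral_mono fun t => mul_le_mul_left ?_ _
  rw [Measure.restrict_apply' measurableSet_Ico, inter_comm]
  exact measure_setOf_le_measureReal_Ioo_le ν s x t

theorem integral_measureReal_Ioo_pow_le (ν : Measure ℝ) [IsFiniteMeasure ν] (s x : ℝ) (n : ℕ) :
    ∫ ξ in Ico s x, ν.real (Ioo ξ x) ^ n ∂ν ≤ ν.real (Ico s x) ^ (n + 1) / (n + 1) := by
  rcases n with _ | n
  · simp
  rw [integral_eq_lintegral_of_nonneg_ae (Filter.Eventually.of_forall fun ξ => by positivity)
    ((antitone_measureReal_Ioo ν x).measurable.pow_const _).aestronglyMeasurable]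
  refine ENNReal.toReal_le_of_le_ofReal (by positivity) ?_
  simpa only [Nat.cast_add, Nat.cast_one, add_assoc, one_add_one_eq_two]
    using lintegral_measureReal_Ioo_pow_le ν s x n

section MonotoneIntegrand

variable {μ : Measure ℝ} [IsFiniteMeasureOnCompacts μ] {g : ℝ → ℝ} {I : ℝ → Set ℝ} {a x : ℝ}

theorem integrableOn_const_sub_of_monotoneOn (hg : MonotoneOn g (Icc a x)) (c : ℝ) {A : Set ℝ}
    (hA : A ⊆ Icc a x) : IntegrableOn (fun ξ => c - g ξ) A μ :=
  ((integrableOn_const isCompact_Icc.measure_lt_top.ne).sub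
    (hg.integrableOn_isCompact isCompact_Icc)).mono_set hA

theorem setIntegral_sub_setIntegral_of_monotoneOn (hg : MonotoneOn g (Icc a x)) (hI : Monotone I)
    (hI_meas : ∀ s, MeasurableSet (I s)) (hIx : I x ⊆ Icc a x) {s t : ℝ} (hst : s ≤ t)
    (htx : t ≤ x) :
    ∫ ξ in I t, (g x - g ξ) ∂μ - ∫ ξ in I s, (g x - g ξ) ∂μ =
      ∫ ξ in I t \ I s, (g x - g ξ) ∂μ :=
  (setIntegral_sdiff (hI_meas s)
    (integrableOn_const_sub_of_monotoneOn hg _ ((hI htx).trans hIx)) (hI hst)).symm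

theorem monotoneOn_setIntegral_sub (hg : MonotoneOn g (Icc a x)) (hI : Monotone I)
    (hI_meas : ∀ s, MeasurableSet (I s)) (hIx : I x ⊆ Icc a x) :
    MonotoneOn (fun s => ∫ ξ in I s, (g x - g ξ) ∂μ) (Iic x) := by
  intro s _ t (htx : t ≤ x) hst
  rw [← sub_nonneg, setIntegral_sub_setIntegral_of_monotoneOn hg hI hI_meas hIx hst htx]
  refine setIntegral_nonneg ((hI_meas t).diff (hI_meas s)) fun ξ hξ => ?_
  obtain ⟨haξ, hξx⟩ := (hI htx).trans hIx hξ.1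
  exact sub_nonneg.2 (hg ⟨haξ, hξx⟩ ⟨haξ.trans hξx, le_rfl⟩ hξx)

end MonotoneIntegrand

noncomputable def weightedMeasure (W : ℝ → ℝ) (μ : Measure ℝ) (x : ℝ) : Measure ℝ :=
  (μ.restrict (Icc 0 x)).withDensity fun ξ => ENNReal.ofReal (W x - W ξ)

section WeightedMeasure

variable {W : ℝ → ℝ} {μ : Measure ℝ} {x : ℝ}

theorem isFiniteMeasure_weightedMeasure [IsFiniteMeasureOnCompacts μ] (hW : Monotone W) :
    IsFiniteMeasure (weightedMeasure W μ x) :=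
  isFiniteMeasure_withDensity_ofReal
    (integrableOn_const_sub_of_monotoneOn (hW.monotoneOn _) (W x) subset_rfl).hasFiniteIntegral

theorem setIntegral_weightedMeasure (hW : Monotone W) {s : ℝ} (hs : 0 ≤ s) (φ : ℝ → ℝ) :
    ∫ ξ in Ico s x, φ ξ ∂weightedMeasure W μ x = ∫ ξ in Ico s x, (W x - W ξ) * φ ξ ∂μ := by
  rw [weightedMeasure, setIntegral_withDensity_eq_setIntegral_toReal_smul
    (f := fun ξ => ENNReal.ofReal (W x - W ξ)) (measurable_const.sub hW.measurable).ennreal_ofReal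
    (ae_of_all _ fun _ => ENNReal.ofReal_lt_top) _ measurableSet_Ico,
    Measure.restrict_restrict measurableSet_Ico,
    inter_eq_left.2 (Ico_subset_Icc_self.trans (Icc_subset_Icc_left hs))]
  refine setIntegral_congr_fun measurableSet_Ico fun ξ hξ => ?_
  rw [ENNReal.toReal_ofReal (sub_nonneg.2 (hW hξ.2.le)), smul_eq_mul]

theorem measureReal_weightedMeasure_Ico (hW : Monotone W) {s : ℝ} (hs : 0 ≤ s) :
    (weightedMeasure W μ x).real (Ico s x) = ∫ ξ in Ico s x, (W x - W ξ) ∂μ := by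
  simpa using setIntegral_weightedMeasure (μ := μ) (x := x) hW hs 1

end WeightedMeasure

structure IsGeneralizedMonomials (W : StieltjesFunction ℝ) (μV : Measure ℝ) (x : ℝ)
    (F : ℕ → ℝ → ℝ) : Prop where
  one : ∀ s, F 1 s = W s
  even : ∀ n : ℕ, 1 ≤ n → ∀ s : ℝ,
    F (2 * n) s = ∫ ξ in Ico (0 : ℝ) s, (F (2 * n - 1) x - F (2 * n - 1) ξ) ∂μV
  odd : ∀ n : ℕ, 1 ≤ n → ∀ s : ℝ,
    F (2 * n + 1) s = ∫ ξ in Ioc (0 : ℝ) s, (F (2 * n) x - F (2 * n) ξ) ∂W.measure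

namespace IsGeneralizedMonomials

variable {W : StieltjesFunction ℝ} {μV : Measure ℝ} {x : ℝ} {F : ℕ → ℝ → ℝ} {n : ℕ}

theorem monotoneOn_odd (hF : IsGeneralizedMonomials W μV x F) (hn : 1 ≤ n)
    (h : MonotoneOn (F (2 * n)) (Icc 0 x)) : MonotoneOn (F (2 * n + 1)) (Icc 0 x) := by
  rw [funext (hF.odd n hn)]
  exact (monotoneOn_setIntegral_sub h (I := Ioc 0) (fun _ _ h => Ioc_subset_Ioc_right h)
    (fun _ => measurableSet_Ioc) Ioc_subset_Icc_self).mono Icc_subset_Iic_self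

variable [IsFiniteMeasureOnCompacts μV]

theorem monotoneOn_even (hF : IsGeneralizedMonomials W μV x F) (hn : 1 ≤ n)
    (h : MonotoneOn (F (2 * n - 1)) (Icc 0 x)) : MonotoneOn (F (2 * n)) (Icc 0 x) := by
  rw [funext (hF.even n hn)]
  exact (monotoneOn_setIntegral_sub h (I := Ico 0) (fun _ _ h => Ico_subset_Ico_right h)
    (fun _ => measurableSet_Ico) Ico_subset_Icc_self).mono Icc_subset_Iic_self

theorem monotoneOn (hF : IsGeneralizedMonomials W μV x F) :
    ∀ k, 1 ≤ k → MonotoneOn (F k) (Icc 0 x) := by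
  have hodd : ∀ n, MonotoneOn (F (2 * n + 1)) (Icc 0 x) := by
    intro n
    induction n with
    | zero => exact funext hF.one ▸ W.mono.monotoneOn _
    | succ n ih => exact hF.monotoneOn_odd (by omega) (hF.monotoneOn_even (by omega) ih)
  intro k hk
  obtain ⟨n, rfl | rfl⟩ := Nat.even_or_odd' k
  · obtain ⟨m, rfl⟩ : ∃ m, n = m + 1 := ⟨n - 1, by omega⟩
    exact hF.monotoneOn_even (by omega) (hodd m)
  · exact hodd n

theorem sub_even (hF : IsGeneralizedMonomials W μV x F) (hn : 1 ≤ n) {s : ℝ} (hs : 0 ≤ s)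
    (hsx : s ≤ x) :
    F (2 * n) x - F (2 * n) s = ∫ ξ in Ico s x, (F (2 * n - 1) x - F (2 * n - 1) ξ) ∂μV := by
  rw [hF.even n hn, hF.even n hn, setIntegral_sub_setIntegral_of_monotoneOn
    (hF.monotoneOn _ (by omega)) (I := Ico 0) (fun _ _ h => Ico_subset_Ico_right h)
    (fun _ => measurableSet_Ico) Ico_subset_Icc_self hsx le_rfl]
  congr 2
  ext
  simp only [mem_sdiff, mem_Ico]
  grind

theorem sub_odd (hF : IsGeneralizedMonomials W μV x F) (hn : 1 ≤ n) {s : ℝ} (hs : 0 ≤ s)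
    (hsx : s ≤ x) :
    F (2 * n + 1) x - F (2 * n + 1) s =
      ∫ ξ in Ioc s x, (F (2 * n) x - F (2 * n) ξ) ∂W.measure := by
  rw [hF.odd n hn, hF.odd n hn, setIntegral_sub_setIntegral_of_monotoneOn
    (hF.monotoneOn _ (by omega)) (I := Ioc 0) (fun _ _ h => Ioc_subset_Ioc_right h)
    (fun _ => measurableSet_Ioc) Ioc_subset_Icc_self hsx le_rfl]
  congr 2
  ext
  simp only [mem_sdiff, mem_Ioc]
  grind

theorem sub_two (hF : IsGeneralizedMonomials W μV x F) {s : ℝ} (hs : 0 ≤ s) (hsx : s ≤ x) :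
    F 2 x - F 2 s = (weightedMeasure W μV x).real (Ico s x) := by
  rw [measureReal_weightedMeasure_Ico W.mono hs]
  simpa only [hF.one] using hF.sub_even (n := 1) le_rfl hs hsx

theorem sub_odd_le (hF : IsGeneralizedMonomials W μV x F) (hn : 1 ≤ n) {ξ C : ℝ} (hξ : 0 ≤ ξ)
    (hξx : ξ ≤ x) (hC : ∀ η ∈ Ioc ξ x, F (2 * n) x - F (2 * n) η ≤ C) :
    F (2 * n + 1) x - F (2 * n + 1) ξ ≤ C * (W x - W ξ) := by
  rw [hF.sub_odd hn hξ hξx]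
  calc ∫ η in Ioc ξ x, (F (2 * n) x - F (2 * n) η) ∂W.measure
      ≤ ∫ _ in Ioc ξ x, C ∂W.measure :=
        setIntegral_mono_on (integrableOn_const_sub_of_monotoneOn (hF.monotoneOn _ (by omega)) _
          fun η hη => ⟨hξ.trans hη.1.le, hη.2⟩) (integrableOn_const (by simp)) measurableSet_Ioc hC
    _ = C * (W x - W ξ) := by
        rw [setIntegral_const, measureReal_def, W.measure_Ioc,
          ENNReal.toReal_ofReal (sub_nonneg.2 (W.mono hξx)), smul_eq_mul, mul_comm]

theorem sub_odd_le_measureReal_Ioo (hF : IsGeneralizedMonomials W μV x F) (hn : 1 ≤ n)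
    (ih : ∀ η, 0 ≤ η → η ≤ x → F (2 * n) x - F (2 * n) η ≤ (F 2 x - F 2 η) ^ n / n.factorial)
    {ξ : ℝ} (hξ : 0 ≤ ξ) (hξx : ξ ≤ x) :
    F (2 * n + 1) x - F (2 * n + 1) ξ ≤
      (weightedMeasure W μV x).real (Ioo ξ x) ^ n / n.factorial * (W x - W ξ) := by
  have : IsFiniteMeasure (weightedMeasure W μV x) := isFiniteMeasure_weightedMeasure W.mono
  refine hF.sub_odd_le hn hξ hξx fun η hη => (ih η (hξ.trans hη.1.le) hη.2).trans ?_
  rw [hF.sub_two (hξ.trans hη.1.le) hη.2]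
  exact div_le_div_of_nonneg_right
    (pow_le_pow_left₀ measureReal_nonneg (measureReal_mono (Ico_subset_Ioo_left hη.1)) n)
    (by positivity)

theorem sub_even_succ_le (hF : IsGeneralizedMonomials W μV x F) (hn : 1 ≤ n)
    (ih : ∀ η, 0 ≤ η → η ≤ x → F (2 * n) x - F (2 * n) η ≤ (F 2 x - F 2 η) ^ n / n.factorial)
    {s : ℝ} (hs : 0 ≤ s) (hsx : s ≤ x) :
    F (2 * (n + 1)) x - F (2 * (n + 1)) s ≤
      (F 2 x - F 2 s) ^ (n + 1) / (n + 1).factorial := by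
  set ν := weightedMeasure W μV x
  have : IsFiniteMeasure ν := isFiniteMeasure_weightedMeasure W.mono
  have hIco : Ico s x ⊆ Icc 0 x := fun ξ hξ => ⟨hs.trans hξ.1, hξ.2.le⟩
  have hbound_int : IntegrableOn (fun ξ => ν.real (Ioo ξ x) ^ n / n.factorial * (W x - W ξ))
      (Ico s x) μV := by
    refine Integrable.bdd_mul (c := ν.real univ ^ n / n.factorial)
      (integrableOn_const_sub_of_monotoneOn (W.mono.monotoneOn _) _ hIco)
      (((antitone_measureReal_Ioo ν x).measurable.pow_const n).div_const _).aestronglyMeasurable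
      (ae_of_all _ fun ξ => ?_)
    rw [Real.norm_of_nonneg (by positivity)]
    exact div_le_div_of_nonneg_right
      (pow_le_pow_left₀ measureReal_nonneg (measureReal_mono (subset_univ _)) n) (by positivity)
  calc F (2 * (n + 1)) x - F (2 * (n + 1)) s
      = ∫ ξ in Ico s x, (F (2 * n + 1) x - F (2 * n + 1) ξ) ∂μV := hF.sub_even (by omega) hs hsx
    _ ≤ ∫ ξ in Ico s x, ν.real (Ioo ξ x) ^ n / n.factorial * (W x - W ξ) ∂μV :=
        setIntegral_mono_on (integrableOn_const_sub_of_monotoneOn (hF.monotoneOn _ (by omega)) _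
          hIco) hbound_int measurableSet_Ico
          fun ξ hξ => hF.sub_odd_le_measureReal_Ioo hn ih (hs.trans hξ.1) hξ.2.le
    _ = (∫ ξ in Ico s x, ν.real (Ioo ξ x) ^ n ∂ν) / n.factorial := by
        rw [setIntegral_weightedMeasure W.mono hs, ← integral_div]
        congr 1
        funext ξ
        ring
    _ ≤ ν.real (Ico s x) ^ (n + 1) / (n + 1) / n.factorial := by
        gcongr
        exact integral_measureReal_Ioo_pow_le ν s x n
    _ = (F 2 x - F 2 s) ^ (n + 1) / (n + 1).factorial := by
        rw [hF.sub_two hs hsx, Nat.factorial_succ, div_div]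
        push_cast
        ring

end IsGeneralizedMonomials

theorem stmt4_general (W : StieltjesFunction ℝ) (μV : Measure ℝ) [IsFiniteMeasure μV]
    (x : ℝ)
    (F : ℕ → ℝ → ℝ)
    (hF1 : ∀ s, F 1 s = W s)
    (hFeven : ∀ n : ℕ, 1 ≤ n → ∀ s : ℝ,
      F (2*n) s = ∫ ξ in Set.Ico (0:ℝ) s, (F (2*n-1) x - F (2*n-1) ξ) ∂μV)
    (hFodd : ∀ n : ℕ, 1 ≤ n → ∀ s : ℝ,
      F (2*n+1) s = ∫ ξ in Set.Ioc (0:ℝ) s, (F (2*n) x - F (2*n) ξ) ∂W.measure) :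
    ∀ n : ℕ, 1 ≤ n → ∀ s : ℝ, 0 ≤ s → s ≤ x →
      F (2*n) x - F (2*n) s ≤ (F 2 x - F 2 s) ^ n / (n.factorial : ℝ) := by
  have hF : IsGeneralizedMonomials W μV x F := ⟨hF1, hFeven, hFodd⟩
  intro n hn
  induction n, hn using Nat.le_induction with
  | base => simp
  | succ n hn ih => exact fun s hs hsx => hF.sub_even_succ_le hn ih hs hsx

/-- For fixed `x ∈ [0,1]`, with the generalized monomials `F_n(s) = F_n(x,s)` defined
recursively by `F₁(s) = W(s)`, `F_{2n}(s) = ∫_{[0,s)} (F_{2n-1}(x) − F_{2n-1}(ξ)) dV(ξ)`,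
`F_{2n+1}(s) = ∫_{(0,s]} (F_{2n}(x) − F_{2n}(ξ)) dW(ξ)`, one has
`F_{2n}(x) − F_{2n}(s) ≤ (F₂(x) − F₂(s))ⁿ/n!` for all `0 ≤ s ≤ x` and `n ≥ 1`. -/
theorem stmt4 (W : StieltjesFunction ℝ) (V : ℝ → ℝ) (μV : Measure ℝ) [IsFiniteMeasure μV]
    (hW : StrictMonoOn W (Set.Icc 0 1)) (hW0 : W 0 = 0)
    (hV : StrictMonoOn V (Set.Icc 0 1)) (hV0 : V 0 = 0)
    (hVleft : ∀ y ∈ Set.Ioc (0:ℝ) 1, ContinuousWithinAt V (Set.Iic y) y)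
    (hμV : ∀ a b : ℝ, 0 ≤ a → a ≤ b → b ≤ 1 →
      μV (Set.Ico a b) = ENNReal.ofReal (V b - V a))
    (x : ℝ) (hx : x ∈ Set.Icc (0:ℝ) 1)
    (F : ℕ → ℝ → ℝ)
    (hF1 : ∀ s, F 1 s = W s)
    (hFeven : ∀ n : ℕ, 1 ≤ n → ∀ s : ℝ,
      F (2*n) s = ∫ ξ in Set.Ico (0:ℝ) s, (F (2*n-1) x - F (2*n-1) ξ) ∂μV)
    (hFodd : ∀ n : ℕ, 1 ≤ n → ∀ s : ℝ,
      F (2*n+1) s = ∫ ξ in Set.Ioc (0:ℝ) s, (F (2*n) x - F (2*n) ξ) ∂W.measure) :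
    ∀ n : ℕ, 1 ≤ n → ∀ s : ℝ, 0 ≤ s → s ≤ x →
      F (2*n) x - F (2*n) s ≤ (F 2 x - F 2 s) ^ n / (n.factorial : ℝ) :=
  stmt4_general W μV x F hF1 hFeven hFodd
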